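/- There is no finite simple nonabelian group G whose same-size conjugacy class set is {1, 2p, 8p, 16p, 8p²} for an odd prime p. -/
import Mathlib


open scoped MatrixGroups

/-- The size of the conjugacy class of `x`. -/
noncomputable def classSize {G : Type*} [Group G] (x : G) : ℕ :=
  Nat.card {y : G // IsConj x y}

/-- `u_G(n)`: the number of elements of `G` whose conjugacy class has size `n`. -/
noncomputable def sameSizeCount (G : Type*) [Group G] (n : ℕ) : ℕ :=
  Nat.card {x : G // classSize x = n}

/-- `U(G)`: the same-size conjugacy class set of `G`. -/
def sameSizeSet (G : Type*) [Group G] : Set ℕ :=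
  {m | ∃ x : G, m = sameSizeCount G (classSize x)}

section Aux

variable {G : Type*} [Group G]

lemma classSize_eq_of_isConj {x y : G} (h : IsConj x y) : classSize x = classSize y :=
  Nat.card_congr (Equiv.subtypeEquivRight fun _ =>
    ⟨fun hz => h.symm.trans hz, fun hz => h.trans hz⟩)

lemma classSize_one : classSize (1 : G) = 1 := by
  have : Unique {y : G // IsConj 1 y} :=
    { default := ⟨1, IsConj.refl 1⟩
      uniq := fun a => Subtype.ext (by simpa using (isConj_one_right.mp a.2)) }
  simpa [classSize] using Nat.card_unique

lemma mem_center_of_classSize_eq_one [Finite G] {x : G} (h : classSize x = 1) :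
    x ∈ Subgroup.center G := by
  rw [classSize, Nat.card_eq_one_iff_unique] at h
  have hsub := h.1
  refine Subgroup.mem_center_iff.mpr fun g => ?_
  have h1 : (⟨g * x * g⁻¹, isConj_iff.mpr ⟨g, rfl⟩⟩ : {y : G // IsConj x y})
      = ⟨x, IsConj.refl x⟩ := Subsingleton.elim _ _
  have h2 : g * x * g⁻¹ = x := congrArg Subtype.val h1
  calc g * x = (g * x * g⁻¹) * g := by group
    _ = x * g := by rw [h2]

lemma classSize_dvd_card [Finite G] (x : G) : classSize x ∣ Nat.card G := by
  classical
  have : Fintype G := Fintype.ofFinite G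
  have h1 : classSize x = Fintype.card (MulAction.orbit (ConjAct G) x) := by
    rw [classSize, Nat.card_eq_fintype_card]
    refine Fintype.card_congr (Equiv.subtypeEquivRight fun y => ?_)
    rw [ConjAct.mem_orbit_conjAct, isConj_comm]
  have h2 := MulAction.card_orbit_mul_card_stabilizer_eq_card_group (ConjAct G) x
  rw [Nat.card_eq_fintype_card]
  have h3 : Fintype.card (ConjAct G) = Fintype.card G := rfl
  exact ⟨_, by rw [h1, ← h3, ← h2]⟩

lemma sameSizeCount_eq_card_filter [Fintype G] [DecidableEq G] (n : ℕ) :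
    sameSizeCount G n
      = (Finset.univ.filter (fun x : G => classSize x = n)).card := by
  classical
  rw [sameSizeCount, Nat.card_eq_fintype_card, Fintype.card_subtype]

lemma dvd_sameSizeCount [Finite G] (n : ℕ) : n ∣ sameSizeCount G n := by
  classical
  have : Fintype G := Fintype.ofFinite G
  rw [sameSizeCount_eq_card_filter]
  set A : Finset G := Finset.univ.filter (fun x : G => classSize x = n) with hA
  rw [Finset.card_eq_sum_card_fiberwise
    (f := ConjClasses.mk) (t := A.image ConjClasses.mk)
    (fun x hx => Finset.mem_image_of_mem _ hx)]
  refine Finset.dvd_sum fun c hc => ?_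
  obtain ⟨x₀, hx₀A, hx₀⟩ := Finset.mem_image.mp hc
  have hx₀n : classSize x₀ = n := (Finset.mem_filter.mp hx₀A).2
  have hfib : A.filter (fun y => ConjClasses.mk y = c)
      = Finset.univ.filter (fun y => IsConj x₀ y) := by
    ext y
    simp only [hA, Finset.mem_filter, Finset.mem_univ, true_and, ← hx₀,
      ConjClasses.mk_eq_mk_iff_isConj]
    constructor
    · rintro ⟨-, h⟩; exact h.symm
    · intro h; exact ⟨(classSize_eq_of_isConj h).symm.trans hx₀n, h.symm⟩
  rw [hfib, ← Fintype.card_subtype, ← Nat.card_eq_fintype_card, ← classSize, hx₀n]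

end Aux

theorem stmt_8 (p : ℕ) (hp : p.Prime) (hodd : Odd p) (G : Type*) [Group G]
    [Finite G] [IsSimpleGroup G] (hna : ¬ ∀ a b : G, a * b = b * a) :
    sameSizeSet G ≠ {1, 2 * p, 8 * p, 16 * p, 8 * p ^ 2} := by
  classical
  intro h
  have : Fintype G := Fintype.ofFinite G
  -- the center is trivial
  have hcen : Subgroup.center G = ⊥ := by
    rcases IsSimpleGroup.eq_bot_or_eq_top_of_normal (Subgroup.center G) inferInstance with
      hb | ht
    · exact hb
    · exact absurd (fun a b => by
        have : b ∈ Subgroup.center G := ht ▸ Subgroup.mem_top b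
        exact Subgroup.mem_center_iff.mp this a) hna
  -- u_G(1) = 1
  have hu1 : sameSizeCount G 1 = 1 := by
    have : Unique {x : G // classSize x = 1} :=
      { default := ⟨1, classSize_one⟩
        uniq := fun a => Subtype.ext (by
          have := mem_center_of_classSize_eq_one a.2
          rw [hcen, Subgroup.mem_bot] at this
          exact this) }
    simpa [sameSizeCount] using Nat.card_unique
  -- every value of u_G on a class size lies in the given set
  have hmem : ∀ x : G, sameSizeCount G (classSize x)
      ∈ ({1, 2 * p, 8 * p, 16 * p, 8 * p ^ 2} : Set ℕ) := fun x => h ▸ ⟨x, rfl⟩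
  have hp2 : 2 ≤ p := hp.two_le
  -- |G| is odd
  have hoddG : Odd (Nat.card G) := by
    rw [Nat.card_eq_fintype_card, ← Finset.card_univ,
      Finset.card_eq_sum_card_fiberwise (f := classSize)
        (t := Finset.univ.image classSize)
        (fun x _ => Finset.mem_image_of_mem _ (Finset.mem_univ x))]
    have h1mem : (1 : ℕ) ∈ Finset.univ.image (classSize (G := G)) := by
      exact Finset.mem_image.mpr ⟨1, Finset.mem_univ _, classSize_one⟩
    rw [← Finset.add_sum_erase _ _ h1mem]
    have hfil : ∀ n : ℕ, (Finset.univ.filter (fun x : G => classSize x = n)).card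
        = sameSizeCount G n := fun n => (sameSizeCount_eq_card_filter n).symm
    rw [hfil, hu1]
    have heven : 2 ∣ ∑ n ∈ (Finset.univ.image (classSize (G := G))).erase 1,
        (Finset.univ.filter (fun x : G => classSize x = n)).card := by
      refine Finset.dvd_sum fun n hn => ?_
      have hn1 : n ≠ 1 := (Finset.mem_erase.mp hn).1
      obtain ⟨x, -, hx⟩ := Finset.mem_image.mp (Finset.mem_erase.mp hn).2
      rw [hfil]
      have hmem' := hmem x
      rw [hx] at hmem'
      have hdvd : n ∣ sameSizeCount G n := dvd_sameSizeCount n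
      simp only [Set.mem_insert_iff, Set.mem_singleton_iff] at hmem'
      rcases hmem' with h' | h' | h' | h' | h'
      · rw [h'] at hdvd
        exact (hn1 (Nat.eq_one_of_dvd_one hdvd)).elim
      · rw [h']; exact ⟨p, by ring⟩
      · rw [h']; exact ⟨4 * p, by ring⟩
      · rw [h']; exact ⟨8 * p, by ring⟩
      · rw [h']; exact ⟨4 * p ^ 2, by ring⟩
    obtain ⟨k, hk⟩ := heven
    rw [hk]
    exact ⟨k, by ring⟩
  -- 2p is a u-value
  have h2p : (2 * p) ∈ sameSizeSet G := by
    rw [h]; right; left; rfl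
  obtain ⟨x, hx⟩ := h2p
  have hxdvd : classSize x ∣ 2 * p := hx ▸ dvd_sameSizeCount _
  have hxoddn : Odd (classSize x) :=
    hoddG.of_dvd_nat (classSize_dvd_card x)
  have hxp : classSize x ∣ p :=
    (Nat.Coprime.dvd_mul_left (Nat.coprime_comm.mp hxoddn.coprime_two_left)).mp hxdvd
  have hxcase := hp.eq_one_or_self_of_dvd _ hxp
  have hx1 : classSize x ≠ 1 := by
    intro h1
    rw [h1, hu1] at hx
    omega
  have hxP : classSize x = p := hxcase.resolve_left hx1
  -- 8p is a u-value
  have h8p : (8 * p) ∈ sameSizeSet G := by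
    rw [h]; right; right; left; rfl
  obtain ⟨y, hy⟩ := h8p
  have hydvd : classSize y ∣ 8 * p := hy ▸ dvd_sameSizeCount _
  have hyoddn : Odd (classSize y) :=
    hoddG.of_dvd_nat (classSize_dvd_card y)
  have hycop : Nat.Coprime (classSize y) 8 := by
    have h2 : Nat.Coprime (classSize y) 2 := Nat.coprime_comm.mp hyoddn.coprime_two_left
    have : Nat.Coprime (classSize y) (2 ^ 3) := Nat.Coprime.pow_right 3 h2
    simpa using this
  have hyp : classSize y ∣ p := (Nat.Coprime.dvd_mul_left hycop).mp hydvd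
  have hycase := hp.eq_one_or_self_of_dvd _ hyp
  have hy1 : classSize y ≠ 1 := by
    intro h1
    rw [h1, hu1] at hy
    omega
  have hyP : classSize y = p := hycase.resolve_left hy1
  rw [hxP] at hx
  rw [hyP] at hy
  omega
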